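/- Let n ≥ 2 and let h : {1,…,n} → {1,…,n} be a Hessenberg function. Then max{ℓ(w) : w ∈ S_n, w⁻¹(1) ≤ h(w⁻¹(n))} = (n−1)(n−2)/2 + max{h(j) − j : 1 ≤ j ≤ n}. -/

import Mathlib

/-!
Let `a`, `b` be the positions of the values `1` and `n` in `w`. Every pair `x < y` with `y = b`
or `x = a` is a non-inversion, and there are `b + (n - 1 - a) - [a < b]` of them (0-indexed), so
`ℓ(w) ≤ C(n-1, 2) + (a - b)` with truncated subtraction; the condition on `w` bounds `a - b` by
`h(b+1) - (b+1)`. Conversely, the permutation with `1` at `a`, `n` at `b` and all other values in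
decreasing order has exactly these non-inversions. Taking `b = j - 1`, `a = h j - 1` for `j`
maximizing `h j - j` (or `a = 0`, `b = 1` when that maximum is `0`) attains the bound.
-/

/-- Number of inversions of a permutation of {1,…,n} (encoded on `Fin n`):
`ℓ(w) = |{(a,b) : a < b, w(a) > w(b)}|`. -/
def invCount {n : ℕ} (w : Equiv.Perm (Fin n)) : ℕ :=
  (Finset.univ.filter (fun p : Fin n × Fin n => p.1 < p.2 ∧ w p.2 < w p.1)).card

open Finset

section Pairs

variable {n : ℕ}

def ascPairs (n : ℕ) : Finset (Fin n × Fin n) := univ.filter fun p => p.1 < p.2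

lemma card_ascPairs (n : ℕ) : #(ascPairs n) = n.choose 2 := by
  rw [ascPairs, card_filter, Fintype.sum_prod_type_right]
  simp only [← card_filter]
  have hfib (y : Fin n) : #(univ.filter fun x : Fin n => x < y) = y := by
    rw [filter_gt_eq_Iio, Fin.card_Iio]
  simp only [hfib, Fin.sum_univ_eq_sum_range (fun i => i), sum_range_id, Nat.choose_two_right]

lemma choose_two_eq_add_sub_one (hn : 1 ≤ n) : n.choose 2 = (n - 1).choose 2 + (n - 1) := by
  obtain ⟨m, rfl⟩ : ∃ m, n = m + 1 := ⟨n - 1, by omega⟩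
  rw [Nat.choose_succ_succ', Nat.choose_one_right, Nat.add_sub_cancel, add_comm]

def anchoredPairs (a b : Fin n) : Finset (Fin n × Fin n) := Iio b ×ˢ {b} ∪ {a} ×ˢ Ioi a

lemma card_anchoredPairs_add (a b : Fin n) :
    #(anchoredPairs a b) + (if a < b then 1 else 0) = b + (n - 1 - a) := by
  have hinter : #((Iio b ×ˢ {b}) ∩ ({a} ×ˢ Ioi a)) = if a < b then 1 else 0 := by
    have hmem (p : Fin n × Fin n) :
        p ∈ (Iio b ×ˢ {b}) ∩ ({a} ×ˢ Ioi a) ↔ p = (a, b) ∧ a < b := by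
      simp only [mem_inter, mem_product, mem_Iio, mem_Ioi, mem_singleton, Prod.ext_iff]
      grind
    split_ifs with hab
    · exact card_eq_one.2 ⟨(a, b), by ext p; rw [hmem, mem_singleton, and_iff_left hab]⟩
    · exact card_eq_zero.2 (by ext p; rw [hmem, iff_false_right (notMem_empty p)]; tauto)
  rw [anchoredPairs, ← hinter, card_union_add_card_inter, card_product, card_product,
    Fin.card_Iio, Fin.card_Ioi, card_singleton, card_singleton, mul_one, one_mul]

def nonInversions (w : Equiv.Perm (Fin n)) : Finset (Fin n × Fin n) :=
  (ascPairs n).filter fun p => ¬ w p.2 < w p.1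

lemma invCount_eq_card_filter_ascPairs (w : Equiv.Perm (Fin n)) :
    invCount w = #((ascPairs n).filter fun p => w p.2 < w p.1) := by
  rw [ascPairs, filter_filter]; rfl

lemma invCount_add_card_nonInversions (w : Equiv.Perm (Fin n)) :
    invCount w + #(nonInversions w) = n.choose 2 := by
  rw [← card_ascPairs, invCount_eq_card_filter_ascPairs]
  exact card_filter_add_card_filter_not _

lemma anchoredPairs_subset_nonInversions (w : Equiv.Perm (Fin n)) {a b : Fin n}
    (ha : ∀ x, w a ≤ w x) (hb : ∀ x, w x ≤ w b) : anchoredPairs a b ⊆ nonInversions w := by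
  rintro ⟨x, y⟩ hxy
  simp only [anchoredPairs, mem_union, mem_product, mem_Iio, mem_Ioi, mem_singleton] at hxy
  simp only [nonInversions, ascPairs, mem_filter, mem_univ, true_and, not_lt]
  rcases hxy with ⟨hxy, rfl⟩ | ⟨rfl, hxy⟩
  exacts [⟨hxy, hb x⟩, ⟨hxy, ha y⟩]

lemma invCount_le (w : Equiv.Perm (Fin n)) {a b : Fin n}
    (ha : ∀ x, w a ≤ w x) (hb : ∀ x, w x ≤ w b) :
    invCount w ≤ (n - 1).choose 2 + (a - b) := by
  have := card_le_card (anchoredPairs_subset_nonInversions w ha hb)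
  have := card_anchoredPairs_add a b
  have := invCount_add_card_nonInversions w
  have := choose_two_eq_add_sub_one (n := n) (by omega)
  split_ifs at * <;> simp only [Fin.lt_def] at * <;> omega

end Pairs

section Extremal

variable {n : ℕ} {a b : Fin n}

/- The least value sits at `a`, the greatest at `b`, and the others appear in decreasing order,
so the only non-inversions are the pairs through `a` or `b`. -/
def extremalFun (a b : Fin n) (hab : a ≠ b) (p : Fin n) : Fin n :=
  ⟨if (p : ℕ) = a then 0 else if (p : ℕ) = b then n - 1 else
      n - 2 + (if (a : ℕ) < p then 1 else 0) + (if (b : ℕ) < p then 1 else 0) - p, by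
    have := Fin.val_ne_of_ne hab; have := a.isLt; have := b.isLt; have := p.isLt
    split_ifs <;> omega⟩

lemma extremalFun_injective (hab : a ≠ b) : Function.Injective (extremalFun a b hab) := by
  intro p q hpq
  have := Fin.val_ne_of_ne hab; have := a.isLt; have := b.isLt; have := p.isLt; have := q.isLt
  simp only [extremalFun, Fin.ext_iff] at hpq ⊢
  split_ifs at hpq <;> omega

noncomputable def extremalPerm (a b : Fin n) (hab : a ≠ b) : Equiv.Perm (Fin n) :=
  Equiv.ofBijective _ (Finite.injective_iff_bijective.mp (extremalFun_injective hab))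

lemma extremalPerm_inv_apply_zero (hab : a ≠ b) (h0 : 0 < n) :
    (extremalPerm a b hab)⁻¹ ⟨0, h0⟩ = a := by
  rw [Equiv.Perm.inv_eq_iff_eq]
  ext; simp [extremalPerm, extremalFun]

lemma extremalPerm_inv_apply_sub_one (hab : a ≠ b) (h1 : n - 1 < n) :
    (extremalPerm a b hab)⁻¹ ⟨n - 1, h1⟩ = b := by
  rw [Equiv.Perm.inv_eq_iff_eq]
  ext; simp [extremalPerm, extremalFun, Fin.val_ne_of_ne hab.symm]

lemma nonInversions_extremalPerm (hab : a ≠ b) :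
    nonInversions (extremalPerm a b hab) = anchoredPairs a b := by
  ext ⟨x, y⟩
  have := Fin.val_ne_of_ne hab; have := a.isLt; have := b.isLt; have := x.isLt; have := y.isLt
  simp only [nonInversions, ascPairs, anchoredPairs, extremalPerm, extremalFun, mem_filter,
    mem_univ, true_and, mem_union, mem_product, mem_Iio, mem_Ioi, mem_singleton,
    Equiv.ofBijective_apply, Fin.lt_def, Fin.ext_iff]
  split_ifs <;> omega

lemma invCount_extremalPerm_add (hab : a ≠ b) :
    invCount (extremalPerm a b hab) + (b + (n - 1 - a)) =
      (n - 1).choose 2 + (n - 1) + if a < b then 1 else 0 := by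
  have := card_anchoredPairs_add a b
  have := invCount_add_card_nonInversions (extremalPerm a b hab)
  rw [nonInversions_extremalPerm, choose_two_eq_add_sub_one (by omega)] at this
  omega

lemma invCount_extremalPerm_of_lt (hba : b < a) :
    invCount (extremalPerm a b hba.ne') = (n - 1).choose 2 + (a - b) := by
  have := invCount_extremalPerm_add hba.ne'
  rw [if_neg hba.not_gt] at this
  omega

lemma invCount_extremalPerm_of_val_eq_succ (hab : (b : ℕ) = a + 1) :
    invCount (extremalPerm a b (Fin.ne_of_val_ne (by omega))) = (n - 1).choose 2 := by
  have := invCount_extremalPerm_add (a := a) (b := b) (Fin.ne_of_val_ne (by omega))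
  rw [if_pos (Fin.lt_def.2 (by omega))] at this
  omega

lemma exists_perm_le_invCount (hn : 2 ≤ n) {h : ℕ → ℕ} {j : ℕ} (hj : 1 ≤ j) (hjh : j ≤ h j)
    (hhn : h j ≤ n) (h2 : 2 ≤ h 2) :
    ∃ w : Equiv.Perm (Fin n), ((w⁻¹ ⟨0, by omega⟩ : Fin n) : ℕ) + 1 ≤
        h (((w⁻¹ ⟨n - 1, by omega⟩ : Fin n) : ℕ) + 1) ∧
      (n - 1).choose 2 + (h j - j) ≤ invCount w := by
  rcases hjh.lt_or_eq with hlt | heq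
  · have hba : (⟨j - 1, by omega⟩ : Fin n) < ⟨h j - 1, by omega⟩ := Fin.mk_lt_mk.2 (by omega)
    refine ⟨extremalPerm _ _ hba.ne', ?_, ?_⟩
    · rw [extremalPerm_inv_apply_zero, extremalPerm_inv_apply_sub_one, Fin.val_mk, Fin.val_mk,
        Nat.sub_add_cancel hj]
      omega
    · rw [invCount_extremalPerm_of_lt hba, Fin.val_mk, Fin.val_mk]
      omega
  · refine ⟨extremalPerm ⟨0, by omega⟩ ⟨1, by omega⟩ (Fin.ne_of_val_ne zero_ne_one), ?_, ?_⟩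
    · rw [extremalPerm_inv_apply_zero, extremalPerm_inv_apply_sub_one]
      exact le_of_add_le_right h2
    · rw [invCount_extremalPerm_of_val_eq_succ rfl]
      omega

end Extremal

/-- For n ≥ 2 and a Hessenberg function h,
max{ℓ(w) : w ∈ S_n, w⁻¹(1) ≤ h(w⁻¹(n))} = (n−1)(n−2)/2 + max{h(j) − j : 1 ≤ j ≤ n}.
Both maxima are over nonempty sets and are expressed with `Finset.sup` (into ℕ).
Permutations are encoded on `Fin n`, position j ∈ {1,…,n} corresponding to `⟨j-1,_⟩`. -/
theorem stmt_4 (n : ℕ) (hn : 2 ≤ n) (h : ℕ → ℕ)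
    (hdom : ∀ j, 1 ≤ j → j ≤ n → j ≤ h j ∧ h j ≤ n) :
    (Finset.univ.filter (fun w : Equiv.Perm (Fin n) =>
        ((w⁻¹ ⟨0, by omega⟩ : Fin n) : ℕ) + 1 ≤
          h (((w⁻¹ ⟨n - 1, by omega⟩ : Fin n) : ℕ) + 1))).sup (fun w => invCount w) =
      (n - 1) * (n - 2) / 2 + (Finset.Icc 1 n).sup (fun j => h j - j) := by
  rw [show (n - 1) * (n - 2) / 2 = (n - 1).choose 2 by rw [Nat.choose_two_right, Nat.sub_sub]]
  apply le_antisymm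
  · refine Finset.sup_le fun w hw => ?_
    have hcond := (mem_filter.1 hw).2
    set a := w⁻¹ ⟨0, by omega⟩
    set b := w⁻¹ ⟨n - 1, by omega⟩
    have hwa : (w a : ℕ) = 0 := by simp [a]
    have hwb : (w b : ℕ) = n - 1 := by simp [b]
    refine (invCount_le w (a := a) (b := b) (fun x => by rw [Fin.le_def]; omega)
      (fun x => by rw [Fin.le_def]; omega)).trans (Nat.add_le_add_left ?_ _)
    calc (a : ℕ) - b ≤ h (b + 1) - (b + 1) := by omega
      _ ≤ _ := le_sup (f := fun j => h j - j) (mem_Icc.2 ⟨le_add_self, b.isLt⟩)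
  · obtain ⟨j, hj, hjM⟩ := exists_mem_eq_sup (Icc 1 n) ⟨1, by simp; omega⟩ fun j => h j - j
    obtain ⟨hj1, hjn⟩ := mem_Icc.1 hj
    obtain ⟨w, hw, hinv⟩ := exists_perm_le_invCount hn hj1 (hdom j hj1 hjn).1 (hdom j hj1 hjn).2
      (hdom 2 (by omega) hn).1
    rw [hjM]
    exact hinv.trans (le_sup (mem_filter.2 ⟨mem_univ w, hw⟩))
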